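/- Density of the q-deformed rational intervals: for every real q with 0 < q < 1, the closure in ℝ of the union ⋃_{x ∈ ℚ, x > 0} [ [x]♭_q , [x]♯_q ] of the closed intervals with left endpoint the left q-deformation and right endpoint the right q-deformation of x equals the closed interval [0, 1/(1−q)]. -/

import Mathlib

open Matrix Filter

/-- The q-deformed generator σ₁(q) = [[q⁻¹, −q⁻¹], [0, 1]]. -/
noncomputable def sig1 (q : ℝ) : Matrix (Fin 2) (Fin 2) ℝ := !![q⁻¹, -q⁻¹; 0, 1]

/-- The q-deformed generator σ₂(q) = [[1, 0], [1, q⁻¹]]. -/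
noncomputable def sig2 (q : ℝ) : Matrix (Fin 2) (Fin 2) ℝ := !![1, 0; 1, q⁻¹]

/-- `betaMat q a k` is the product of the first `k` alternating factors
`σ₁(q)^{-a 1} · σ₂(q)^{a 2} · σ₁(q)^{-a 3} ⋯` (indices start at 1). -/
noncomputable def betaMat (q : ℝ) (a : ℕ → ℤ) : ℕ → Matrix (Fin 2) (Fin 2) ℝ
  | 0 => 1
  | k + 1 => betaMat q a k *
      (if (k + 1) % 2 = 1 then sig1 q ^ (-(a (k + 1))) else sig2 q ^ (a (k + 1)))

/-- Möbius action of a 2×2 real matrix on a real number: z ↦ (Az + B)/(Cz + D). -/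
noncomputable def mobiusAct (M : Matrix (Fin 2) (Fin 2) ℝ) (z : ℝ) : ℝ :=
  (M 0 0 * z + M 0 1) / (M 1 0 * z + M 1 1)

/-- Möbius image of ∞ under a 2×2 real matrix: ∞ ↦ A/C. -/
noncomputable def mobiusInf (M : Matrix (Fin 2) (Fin 2) ℝ) : ℝ := M 0 0 / M 1 0

/-- `a` (on indices 1,…,2n) is an even continued form: either `a₁ ≥ 0` and `aᵢ ≥ 1` for
`2 ≤ i ≤ 2n`, or `a₁ ≤ 0` and `aᵢ ≤ −1` for `2 ≤ i ≤ 2n`. -/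
def IsEvenForm (n : ℕ) (a : ℕ → ℤ) : Prop :=
  1 ≤ n ∧ ((0 ≤ a 1 ∧ ∀ i, 2 ≤ i → i ≤ 2 * n → 1 ≤ a i)
    ∨ (a 1 ≤ 0 ∧ ∀ i, 2 ≤ i → i ≤ 2 * n → a i ≤ -1))

/-- Value of the continued fraction `a i + 1/(a (i+1) + 1/(⋯ + 1/(a last)))`. -/
def cfVal (a : ℕ → ℤ) (last i : ℕ) : ℚ :=
  if last ≤ i then (a i : ℚ)
  else (a i : ℚ) + 1 / cfVal a last (i + 1)
termination_by last - i
decreasing_by omega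

/-- `a` (on indices 1,…,2n) is the even continued fraction expansion of the rational `x`:
for `x ≠ 0` it is an even continued form of value `x`; by convention the expansion of `0`
is `(−1, 1)`. -/
def IsECFExp (n : ℕ) (a : ℕ → ℤ) (x : ℚ) : Prop :=
  (x ≠ 0 ∧ IsEvenForm n a ∧ cfVal a (2 * n) 1 = x) ∨
  (x = 0 ∧ n = 1 ∧ a 1 = -1 ∧ a 2 = 1)

/-- The right q-deformation attached to expansion data `(n, a)`:
the image of ∞ under the Möbius transformation of β(a, q). -/
noncomputable def sharpVal (q : ℝ) (n : ℕ) (a : ℕ → ℤ) : ℝ :=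
  mobiusInf (betaMat q a (2 * n))

/-- The left q-deformation attached to expansion data `(n, a)`:
the image of 1/(1−q) under the Möbius transformation of β(a, q). -/
noncomputable def flatVal (q : ℝ) (n : ℕ) (a : ℕ → ℤ) : ℝ :=
  mobiusAct (betaMat q a (2 * n)) (1 / (1 - q))

/-!
For a positive rational the matrix `β(a, q)` is a word in `σ₁⁻¹` and `σ₂` ending in `σ₂`. Both
letters map the cone of vectors `v` with `v 1 > 0` and `v 0 / v 1 ∈ [0, 1/(1-q)]` into itself,
so every interval `[[x]♭_q, [x]♯_q]` lies in `[0, 1/(1-q)]`.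

Conversely, `x ↦ x + 1` and `x ↦ x/(1+x)` multiply `β` on the left by `σ₁⁻¹` and by `σ₂`, so they
map the intervals onto intervals through the Möbius maps `w ↦ qw + 1` and `w ↦ w/(w + q⁻¹)`.
These are `q`-Lipschitz on `[0, ∞)` and send `[0, 1/(1-q)]` onto `[1, 1/(1-q)]` and `[0, q]`; with
the interval `[q, 1]` of `x = 1` they cover `[0, 1/(1-q)]`, so iterating puts a point of the union
within `q^k/(1-q)` of every point of `[0, 1/(1-q)]`.
-/

open Set Metric Topology

theorem subset_closure_of_contracting_cover {X ι : Type*} [PseudoMetricSpace X] {I S : Set X}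
    {f : ι → X → X} {c : NNReal} (hc : c < 1) (hI : Bornology.IsBounded I) (hSI : S ⊆ I)
    (hS : S.Nonempty) (hf : ∀ i, LipschitzOnWith c (f i) I) (hfS : ∀ i, MapsTo (f i) S S)
    (hcover : I ⊆ S ∪ ⋃ i, f i '' I) : I ⊆ closure S := by
  have approx : ∀ k : ℕ, ∀ t ∈ I, ∃ s ∈ S, dist t s ≤ c ^ k * diam I := by
    intro k
    induction k with
    | zero =>
      obtain ⟨s, hs⟩ := hS
      exact fun t ht => ⟨s, hs, by simpa using dist_le_diam_of_mem hI ht (hSI hs)⟩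
    | succ k ih =>
      intro t ht
      rcases hcover ht with htS | htf
      · exact ⟨t, htS, by rw [dist_self]; positivity⟩
      obtain ⟨i, t', ht', rfl⟩ : ∃ i, ∃ t' ∈ I, f i t' = t := by simpa using htf
      obtain ⟨s, hs, hts⟩ := ih t' ht'
      refine ⟨f i s, hfS i hs, ?_⟩
      calc dist (f i t') (f i s) ≤ c * dist t' s := (hf i).dist_le_mul t' ht' s (hSI hs)
        _ ≤ c * (c ^ k * diam I) := by gcongr
        _ = c ^ (k + 1) * diam I := by ring
  have hlim : Tendsto (fun k : ℕ => (c : ℝ) ^ k * diam I) atTop (𝓝 0) := by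
    simpa using (tendsto_pow_atTop_nhds_zero_of_lt_one c.2 hc).mul_const (diam I)
  intro t ht
  refine Metric.mem_closure_iff.mpr fun ε hε => ?_
  obtain ⟨k, hk⟩ := (hlim.eventually (gt_mem_nhds hε)).exists
  obtain ⟨s, hs, hts⟩ := approx k t ht
  exact ⟨s, hs, hts.trans_lt hk⟩

section Mobius

variable {X : Matrix (Fin 2) (Fin 2) ℝ}

lemma mobiusAct_eq_div (M : Matrix (Fin 2) (Fin 2) ℝ) (z : ℝ) :
    mobiusAct M z = (M *ᵥ ![z, 1]) 0 / (M *ᵥ ![z, 1]) 1 := by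
  simp [mobiusAct]

lemma mobiusInf_eq_div (M : Matrix (Fin 2) (Fin 2) ℝ) :
    mobiusInf M = (M *ᵥ ![1, 0]) 0 / (M *ᵥ ![1, 0]) 1 := by
  simp [mobiusInf]

lemma mulVec_div_eq_mobiusAct {w : Fin 2 → ℝ} (hw : w 1 ≠ 0) :
    (X *ᵥ w) 0 / (X *ᵥ w) 1 = mobiusAct X (w 0 / w 1) := by
  simp only [mobiusAct, mulVec_fin_two, cons_val_zero, cons_val_one]
  field_simp

lemma mobiusAct_sub_mobiusAct {x y : ℝ} (hx : X 1 0 * x + X 1 1 ≠ 0)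
    (hy : X 1 0 * y + X 1 1 ≠ 0) :
    mobiusAct X x - mobiusAct X y =
      X.det * (x - y) / ((X 1 0 * x + X 1 1) * (X 1 0 * y + X 1 1)) := by
  rw [mobiusAct, mobiusAct, det_fin_two, div_sub_div _ _ hx hy]
  ring_nf

variable (hC : 0 ≤ X 1 0) (hD : 0 < X 1 1)
include hC hD

lemma mobiusAct_le_mobiusAct (hdet : 0 ≤ X.det) {x y : ℝ} (hx : 0 ≤ x) (hxy : x ≤ y) :
    mobiusAct X x ≤ mobiusAct X y := by
  have hx' : 0 < X 1 0 * x + X 1 1 := by positivity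
  have hy' : 0 < X 1 0 * y + X 1 1 := by have := hx.trans hxy; positivity
  rw [← sub_nonneg, mobiusAct_sub_mobiusAct hy'.ne' hx'.ne']
  have : 0 ≤ y - x := sub_nonneg.mpr hxy
  positivity

lemma lipschitzOnWith_mobiusAct :
    LipschitzOnWith (|X.det| / X 1 1 ^ 2).toNNReal (mobiusAct X) (Ici 0) := by
  refine LipschitzOnWith.of_dist_le_mul fun x hx y hy => ?_
  rw [mem_Ici] at hx hy
  have hx' : 0 < X 1 0 * x + X 1 1 := by positivity
  have hy' : 0 < X 1 0 * y + X 1 1 := by positivity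
  have hprod : X 1 1 ^ 2 ≤ (X 1 0 * x + X 1 1) * (X 1 0 * y + X 1 1) := by
    rw [sq]; gcongr <;> nlinarith
  rw [Real.coe_toNNReal _ (by positivity), Real.dist_eq, Real.dist_eq,
    mobiusAct_sub_mobiusAct hx'.ne' hy'.ne', abs_div, abs_mul, abs_of_pos (mul_pos hx' hy'),
    div_mul_eq_mul_div]
  exact div_le_div_of_nonneg_left (by positivity) (by positivity) hprod

end Mobius

section

variable {q : ℝ}

noncomputable def sig1Inv (q : ℝ) : Matrix (Fin 2) (Fin 2) ℝ := !![q, 1; 0, 1]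

lemma sig1_inv (hq : q ≠ 0) : (sig1 q)⁻¹ = sig1Inv q := by
  refine inv_eq_left_inv ?_
  ext i j
  fin_cases i <;> fin_cases j <;> simp [sig1Inv, sig1, mul_apply, Fin.sum_univ_two, hq]

lemma sig1_zpow_neg_natCast (hq : q ≠ 0) (k : ℕ) : sig1 q ^ (-(k : ℤ)) = sig1Inv q ^ k := by
  rw [zpow_neg_natCast, ← inv_pow', sig1_inv hq]

lemma betaMat_succ (a : ℕ → ℤ) (k : ℕ) : betaMat q a (k + 1) = betaMat q a k *
    (if (k + 1) % 2 = 1 then sig1 q ^ (-(a (k + 1))) else sig2 q ^ (a (k + 1))) := rfl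

lemma betaMat_two (a : ℕ → ℤ) : betaMat q a 2 = sig1 q ^ (-a 1) * sig2 q ^ a 2 := by
  simp [betaMat]

lemma betaMat_congr {a b : ℕ → ℤ} {k : ℕ} (h : ∀ i, 1 ≤ i → i ≤ k → a i = b i) :
    betaMat q a k = betaMat q b k := by
  induction k with
  | zero => rfl
  | succ k ih =>
    rw [betaMat_succ, betaMat_succ, ih fun i h1 h2 => h i h1 (by omega),
      h (k + 1) (by omega) le_rfl]

lemma betaMat_add_two (a : ℕ → ℤ) (m : ℕ) :
    betaMat q a (m + 2) = betaMat q a 2 * betaMat q (fun i => a (i + 2)) m := by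
  induction m with
  | zero => simp [betaMat]
  | succ m ih =>
    rw [show m + 1 + 2 = m + 2 + 1 by ring, betaMat_succ, ih, betaMat_succ _ m, mul_assoc,
      show (m + 2 + 1) % 2 = (m + 1) % 2 by omega]

lemma betaMat_add_two_eq_mul {a b : ℕ → ℤ} {M : Matrix (Fin 2) (Fin 2) ℝ}
    (htail : ∀ i, 1 ≤ i → b (i + 2) = a (i + 2)) (hhead : betaMat q b 2 = M * betaMat q a 2)
    (m : ℕ) : betaMat q b (m + 2) = M * betaMat q a (m + 2) := by
  rw [betaMat_add_two b, betaMat_add_two a m, hhead, mul_assoc,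
    betaMat_congr fun i hi _ => htail i hi]

def deformCone (q : ℝ) : Set (Fin 2 → ℝ) := {v | 0 ≤ v 0 ∧ 0 < v 1 ∧ (1 - q) * v 0 ≤ v 1}

lemma div_mem_Icc_of_mem_deformCone (hq1 : q < 1) {v : Fin 2 → ℝ} (hv : v ∈ deformCone q) :
    v 0 / v 1 ∈ Icc 0 (1 / (1 - q)) := by
  obtain ⟨h0, h1, h2⟩ := hv
  refine ⟨by positivity, ?_⟩
  rw [div_le_div_iff₀ h1 (by linarith)]
  linarith

lemma vec_one_div_one_sub_mem_deformCone (hq1 : q < 1) : ![1 / (1 - q), 1] ∈ deformCone q := by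
  have : 0 < 1 - q := by linarith
  simp [deformCone, this.le, this.ne']

lemma pow_mulVec_mem {n R : Type*} [Fintype n] [DecidableEq n] [Semiring R] {C : Set (n → R)}
    {M : Matrix n n R} (hM : ∀ v ∈ C, M *ᵥ v ∈ C) (k : ℕ) : ∀ v ∈ C, M ^ k *ᵥ v ∈ C := by
  induction k with
  | zero => simp
  | succ k ih => exact fun v hv => by rw [pow_succ, ← mulVec_mulVec]; exact ih _ (hM v hv)

def IsPosEvenForm (n : ℕ) (a : ℕ → ℤ) : Prop :=
  1 ≤ n ∧ 0 ≤ a 1 ∧ ∀ i, 2 ≤ i → i ≤ 2 * n → 1 ≤ a i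

lemma IsPosEvenForm.nonneg {n : ℕ} {a : ℕ → ℤ} (ha : IsPosEvenForm n a) :
    ∀ i, 1 ≤ i → i ≤ 2 * n → 0 ≤ a i := by
  intro i hi1 hi2
  rcases eq_or_lt_of_le hi1 with rfl | hi
  · exact ha.2.1
  · linarith [ha.2.2 i hi hi2]

section

variable (hq0 : 0 < q)
include hq0

lemma sig1Inv_mulVec_mem {v : Fin 2 → ℝ} (hv : v ∈ deformCone q) :
    sig1Inv q *ᵥ v ∈ deformCone q := by
  obtain ⟨h0, h1, h2⟩ := hv
  simp only [deformCone, mem_ofPred_eq, mulVec_fin_two, sig1Inv, of_apply, cons_val',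
    cons_val_zero, cons_val_one, empty_val', cons_val_fin_one]
  refine ⟨by positivity, by linarith, by nlinarith⟩

lemma sig2_mulVec_mem {v : Fin 2 → ℝ} (hv : v ∈ deformCone q) :
    sig2 q *ᵥ v ∈ deformCone q := by
  obtain ⟨h0, h1, h2⟩ := hv
  simp only [deformCone, mem_ofPred_eq, mulVec_fin_two, sig2, of_apply, cons_val',
    cons_val_zero, cons_val_one, empty_val', cons_val_fin_one]
  refine ⟨by linarith, by positivity, by nlinarith [inv_pos.mpr hq0]⟩

lemma betaMat_mulVec_mem {a : ℕ → ℤ} {k : ℕ} (ha : ∀ i, 1 ≤ i → i ≤ k → 0 ≤ a i) :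
    ∀ v ∈ deformCone q, betaMat q a k *ᵥ v ∈ deformCone q := by
  induction k with
  | zero => simp [betaMat]
  | succ k ih =>
    intro v hv
    rw [betaMat_succ, ← mulVec_mulVec]
    refine ih (fun i h1 h2 => ha i h1 (by omega)) _ ?_
    lift a (k + 1) to ℕ using ha (k + 1) (by omega) le_rfl with m
    split_ifs
    · rw [sig1_zpow_neg_natCast hq0.ne']
      exact pow_mulVec_mem (fun _ => sig1Inv_mulVec_mem hq0) m v hv
    · rw [zpow_natCast]
      exact pow_mulVec_mem (fun _ => sig2_mulVec_mem hq0) m v hv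

lemma betaMat_mulVec_one_zero_mem {n : ℕ} {a : ℕ → ℤ} (ha : IsPosEvenForm n a) :
    betaMat q a (2 * n) *ᵥ ![1, 0] ∈ deformCone q := by
  obtain ⟨m, rfl⟩ : ∃ m, n = m + 1 := ⟨n - 1, by have := ha.1; omega⟩
  have hlast := ha.2.2 (2 * m + 1 + 1) (by omega) (by omega)
  rw [show 2 * (m + 1) = 2 * m + 1 + 1 by ring, betaMat_succ, if_neg (by omega),
    ← mulVec_mulVec]
  refine betaMat_mulVec_mem hq0 (fun i h1 h2 => ha.nonneg i h1 (by omega)) _ ?_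
  obtain ⟨b, hb⟩ : ∃ b : ℕ, a (2 * m + 1 + 1) = b + 1 := ⟨(a (2 * m + 1 + 1) - 1).toNat, by omega⟩
  rw [hb, ← Nat.cast_succ, zpow_natCast, pow_succ, ← mulVec_mulVec]
  refine pow_mulVec_mem (fun _ => sig2_mulVec_mem hq0) b _ ?_
  simp [deformCone, sig2, hq0.le]

lemma flatVal_mem_Icc (hq1 : q < 1) {n : ℕ} {a : ℕ → ℤ} (ha : IsPosEvenForm n a) :
    flatVal q n a ∈ Icc 0 (1 / (1 - q)) := by
  rw [flatVal, mobiusAct_eq_div]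
  exact div_mem_Icc_of_mem_deformCone hq1
    (betaMat_mulVec_mem hq0 ha.nonneg _ (vec_one_div_one_sub_mem_deformCone hq1))

lemma sharpVal_mem_Icc (hq1 : q < 1) {n : ℕ} {a : ℕ → ℤ} (ha : IsPosEvenForm n a) :
    sharpVal q n a ∈ Icc 0 (1 / (1 - q)) := by
  rw [sharpVal, mobiusInf_eq_div]
  exact div_mem_Icc_of_mem_deformCone hq1 (betaMat_mulVec_one_zero_mem hq0 ha)

end

lemma exists_betaMat_eq_sig1Inv_mul (hq : q ≠ 0) {n : ℕ} {a : ℕ → ℤ} (ha : IsPosEvenForm n a) :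
    ∃ n' a', IsPosEvenForm n' a' ∧ betaMat q a' (2 * n') = sig1Inv q * betaMat q a (2 * n) := by
  obtain ⟨hn, h1, h⟩ := ha
  obtain ⟨m, rfl⟩ : ∃ m, n = m + 1 := ⟨n - 1, by omega⟩
  refine ⟨m + 1, Function.update a 1 (a 1 + 1), ⟨hn, ?_, fun i hi2 hi => ?_⟩, ?_⟩
  · simp only [Function.update_self]; omega
  · rw [Function.update_of_ne (by omega)]; exact h i hi2 hi
  refine betaMat_add_two_eq_mul (fun i hi => Function.update_of_ne (by omega) _ _) ?_ (2 * m)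
  rw [betaMat_two, betaMat_two, Function.update_self, Function.update_of_ne (by omega)]
  lift a 1 to ℕ using h1 with k
  rw [← Nat.cast_succ, sig1_zpow_neg_natCast hq, sig1_zpow_neg_natCast hq, pow_succ', mul_assoc]

lemma exists_betaMat_eq_sig2_mul {n : ℕ} {a : ℕ → ℤ} (ha : IsPosEvenForm n a) :
    ∃ n' a', IsPosEvenForm n' a' ∧ betaMat q a' (2 * n') = sig2 q * betaMat q a (2 * n) := by
  obtain ⟨hn, h1, h⟩ := ha
  obtain ⟨m, rfl⟩ : ∃ m, n = m + 1 := ⟨n - 1, by omega⟩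
  rcases h1.eq_or_lt with h1 | h1
  -- `x = [0; a₂, …]` and `x/(1+x) = [0; a₂ + 1, …]`
  · refine ⟨m + 1, Function.update a 2 (a 2 + 1), ⟨hn, ?_, fun i hi2 hi => ?_⟩, ?_⟩
    · rw [Function.update_of_ne (by omega)]; omega
    · rcases eq_or_ne i 2 with rfl | hi2'
      · have := h 2 le_rfl (by omega); simp only [Function.update_self]; omega
      · rw [Function.update_of_ne hi2']; exact h i hi2 hi
    refine betaMat_add_two_eq_mul (fun i hi => Function.update_of_ne (by omega) _ _) ?_ (2 * m)
    have h2 : 0 ≤ a 2 := by linarith [h 2 le_rfl (by omega)]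
    rw [betaMat_two, betaMat_two, Function.update_self, Function.update_of_ne (by omega), ← h1]
    lift a 2 to ℕ using h2 with k
    rw [← Nat.cast_succ, zpow_natCast, zpow_natCast, pow_succ']
    simp
  -- `x = [a₁; a₂, …]` with `a₁ ≥ 1` and `x/(1+x) = [0; 1, a₁, a₂, …]`
  · refine ⟨m + 2, fun i => if i = 1 then 0 else if i = 2 then 1 else a (i - 2),
      ⟨by omega, by simp, fun i hi2 hi => ?_⟩, ?_⟩
    · rcases eq_or_ne i 2 with rfl | hi2'
      · simp
      · dsimp only
        rw [if_neg (by omega), if_neg hi2']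
        rcases eq_or_ne i 3 with rfl | hi3
        · exact h1
        · exact h (i - 2) (by omega) (by omega)
    rw [show 2 * (m + 2) = 2 * (m + 1) + 2 by ring, betaMat_add_two, betaMat_two]
    refine congrArg₂ (· * ·) (by simp) (betaMat_congr fun i hi _ => ?_)
    simp [show i ≠ 0 by omega]

lemma mobiusAct_sig1Inv (w : ℝ) : mobiusAct (sig1Inv q) w = q * w + 1 := by
  simp [mobiusAct, sig1Inv]

lemma mobiusAct_sig2 (w : ℝ) : mobiusAct (sig2 q) w = w / (w + q⁻¹) := by
  simp [mobiusAct, sig2]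

def posDeformedIntervals (q : ℝ) : Set ℝ :=
  ⋃ (n : ℕ) (a : ℕ → ℤ) (_ : IsPosEvenForm n a), Icc (flatVal q n a) (sharpVal q n a)

lemma mem_posDeformedIntervals {z : ℝ} : z ∈ posDeformedIntervals q ↔
    ∃ n a, IsPosEvenForm n a ∧ z ∈ Icc (flatVal q n a) (sharpVal q n a) := by
  simp only [posDeformedIntervals, mem_iUnion, exists_prop]

section

variable (hq0 : 0 < q) (hq1 : q < 1)
include hq0 hq1

lemma posDeformedIntervals_subset_Icc : posDeformedIntervals q ⊆ Icc 0 (1 / (1 - q)) := by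
  intro z hz
  obtain ⟨n, a, ha, hz1, hz2⟩ := mem_posDeformedIntervals.mp hz
  exact ⟨(flatVal_mem_Icc hq0 hq1 ha).1.trans hz1, hz2.trans (sharpVal_mem_Icc hq0 hq1 ha).2⟩

lemma Icc_subset_posDeformedIntervals : Icc q 1 ⊆ posDeformedIntervals q := by
  -- the interval of `x = 1`, whose expansion is `(0, 1)`
  have hβ : betaMat q (fun i => if i = 2 then 1 else 0) (2 * 1) = sig2 q := by simp [betaMat_two]
  refine fun z hz => mem_posDeformedIntervals.mpr
    ⟨1, fun i => if i = 2 then 1 else 0,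
      ⟨le_rfl, by simp, fun i h2 h2' => by obtain rfl : i = 2 := (by omega); simp⟩, ?_⟩
  rw [flatVal, sharpVal, hβ, mobiusAct_sig2, mobiusInf]
  have : (1 : ℝ) - q ≠ 0 := by linarith
  convert hz using 2
  · field_simp; ring
  · simp [sig2]

lemma mapsTo_mobiusAct_posDeformedIntervals {X : Matrix (Fin 2) (Fin 2) ℝ} (hC : 0 ≤ X 1 0)
    (hD : 0 < X 1 1) (hdet : 0 ≤ X.det) (hX : ∀ n a, IsPosEvenForm n a →
      ∃ n' a', IsPosEvenForm n' a' ∧ betaMat q a' (2 * n') = X * betaMat q a (2 * n)) :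
    MapsTo (mobiusAct X) (posDeformedIntervals q) (posDeformedIntervals q) := by
  intro z hz
  obtain ⟨n, a, ha, hz1, hz2⟩ := mem_posDeformedIntervals.mp hz
  obtain ⟨n', a', ha', hβ⟩ := hX n a ha
  have hmem := betaMat_mulVec_mem hq0 ha.nonneg _ (vec_one_div_one_sub_mem_deformCone hq1)
  have hflat : flatVal q n' a' = mobiusAct X (flatVal q n a) := by
    rw [flatVal, flatVal, hβ, mobiusAct_eq_div, ← mulVec_mulVec,
      mulVec_div_eq_mobiusAct hmem.2.1.ne', ← mobiusAct_eq_div]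
  have hsharp : sharpVal q n' a' = mobiusAct X (sharpVal q n a) := by
    rw [sharpVal, sharpVal, hβ, mobiusInf_eq_div, ← mulVec_mulVec,
      mulVec_div_eq_mobiusAct (betaMat_mulVec_one_zero_mem hq0 ha).2.1.ne', ← mobiusInf_eq_div]
  have hflat0 := (flatVal_mem_Icc hq0 hq1 ha).1
  refine mem_posDeformedIntervals.mpr ⟨n', a', ha', ?_, ?_⟩
  · rw [hflat]; exact mobiusAct_le_mobiusAct hC hD hdet hflat0 hz1
  · rw [hsharp]; exact mobiusAct_le_mobiusAct hC hD hdet (hflat0.trans hz1) hz2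

lemma mapsTo_mobiusAct_sig1Inv :
    MapsTo (mobiusAct (sig1Inv q)) (posDeformedIntervals q) (posDeformedIntervals q) :=
  mapsTo_mobiusAct_posDeformedIntervals hq0 hq1 (by simp [sig1Inv]) (by simp [sig1Inv])
    (by simp [sig1Inv, det_fin_two, hq0.le]) fun _ _ => exists_betaMat_eq_sig1Inv_mul hq0.ne'

lemma mapsTo_mobiusAct_sig2 :
    MapsTo (mobiusAct (sig2 q)) (posDeformedIntervals q) (posDeformedIntervals q) :=
  mapsTo_mobiusAct_posDeformedIntervals hq0 hq1 (by simp [sig2]) (by simp [sig2, hq0])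
    (by simp [sig2, det_fin_two, hq0.le]) fun _ _ => exists_betaMat_eq_sig2_mul

lemma Icc_subset_Icc_union_mobiusAct_image : Icc 0 (1 / (1 - q)) ⊆ Icc q 1 ∪
    ⋃ i, mobiusAct (![sig1Inv q, sig2 q] i) '' Icc 0 (1 / (1 - q)) := by
  rintro t ⟨ht0, htu⟩
  have h1q : 0 < 1 - q := by linarith
  rw [le_div_iff₀ h1q] at htu
  simp only [mem_union, mem_iUnion, Fin.exists_fin_two, cons_val_zero, cons_val_one, mem_image,
    mem_Icc]
  rcases lt_or_ge t q with htq | hqt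
  · have h1t : 0 < 1 - t := by linarith
    refine Or.inr (Or.inr ⟨t / (q * (1 - t)), ⟨by positivity, ?_⟩, ?_⟩)
    · rw [div_le_div_iff₀ (by positivity) h1q]; nlinarith
    · rw [mobiusAct_sig2]; field_simp; ring
  rcases le_or_gt t 1 with ht1 | ht1
  · exact Or.inl ⟨hqt, ht1⟩
  · refine Or.inr (Or.inl ⟨(t - 1) / q, ⟨div_nonneg (by linarith) hq0.le, ?_⟩, ?_⟩)
    · rw [div_le_div_iff₀ hq0 h1q]; nlinarith
    · rw [mobiusAct_sig1Inv]; field_simp; ring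

end

lemma lipschitzOnWith_mobiusAct_sig1Inv (hq0 : 0 < q) :
    LipschitzOnWith q.toNNReal (mobiusAct (sig1Inv q)) (Ici 0) := by
  convert lipschitzOnWith_mobiusAct (X := sig1Inv q) (by simp [sig1Inv]) (by simp [sig1Inv])
  simp [sig1Inv, det_fin_two, abs_of_pos hq0]

lemma lipschitzOnWith_mobiusAct_sig2 (hq0 : 0 < q) :
    LipschitzOnWith q.toNNReal (mobiusAct (sig2 q)) (Ici 0) := by
  convert lipschitzOnWith_mobiusAct (X := sig2 q) (by simp [sig2]) (by simp [sig2, hq0]) using 2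
  simp [sig2, det_fin_two, abs_of_pos hq0]
  field_simp

lemma cfVal_neg (a : ℕ → ℤ) (last i : ℕ) : cfVal (-a) last i = -cfVal a last i := by
  rw [cfVal.eq_1 (-a), cfVal.eq_1 a]
  split_ifs
  · simp
  · rw [cfVal_neg a last (i + 1), Pi.neg_apply, Int.cast_neg, one_div_neg_eq_neg_one_div]
    ring
termination_by last - i

lemma one_le_cfVal {a : ℕ → ℤ} {last i : ℕ} (hi : i ≤ last)
    (h : ∀ j, i ≤ j → j ≤ last → 1 ≤ a j) : 1 ≤ cfVal a last i := by
  rw [cfVal]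
  split_ifs with hlast
  · exact_mod_cast h i le_rfl hi
  · have := one_le_cfVal (by omega : i + 1 ≤ last) fun j h1 h2 => h j (by omega) h2
    have : (1 : ℚ) ≤ a i := by exact_mod_cast h i le_rfl hi
    have : 0 < 1 / cfVal a last (i + 1) := by positivity
    linarith
termination_by last - i

lemma cfVal_pos {a : ℕ → ℤ} {last i : ℕ} (hi : 0 ≤ a i) (hlast : i < last)
    (h : ∀ j, i < j → j ≤ last → 1 ≤ a j) : 0 < cfVal a last i := by
  rw [cfVal, if_neg (by omega)]
  have := one_le_cfVal (by omega : i + 1 ≤ last) fun j h1 h2 => h j h1 h2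
  have : (0 : ℚ) ≤ a i := by exact_mod_cast hi
  positivity

lemma IsPosEvenForm.cfVal_pos {n : ℕ} {a : ℕ → ℤ} (ha : IsPosEvenForm n a) :
    0 < cfVal a (2 * n) 1 :=
  _root_.cfVal_pos ha.2.1 (by have := ha.1; omega) fun j hj => ha.2.2 j hj

lemma IsPosEvenForm.isECFExp {n : ℕ} {a : ℕ → ℤ} (ha : IsPosEvenForm n a) :
    IsECFExp n a (cfVal a (2 * n) 1) :=
  Or.inl ⟨ha.cfVal_pos.ne', ⟨ha.1, Or.inl ha.2⟩, rfl⟩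

lemma IsECFExp.isPosEvenForm {n : ℕ} {a : ℕ → ℤ} {x : ℚ} (h : IsECFExp n a x) (hx : 0 < x) :
    IsPosEvenForm n a := by
  rcases h with ⟨-, ⟨hn, hpos | ⟨h1, h⟩⟩, rfl⟩ | ⟨rfl, -⟩
  · exact ⟨hn, hpos⟩
  · have : IsPosEvenForm n (-a) := ⟨hn, by simpa using h1, fun i h2 h2' => by
      simp only [Pi.neg_apply]; linarith [h i h2 h2']⟩
    have := this.cfVal_pos
    rw [cfVal_neg] at this
    linarith
  · exact absurd hx (lt_irrefl 0)

lemma iUnion_isECFExp_eq_posDeformedIntervals :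
    (⋃ (x : ℚ) (_ : 0 < x) (n : ℕ) (a : ℕ → ℤ) (_ : IsECFExp n a x),
      Icc (flatVal q n a) (sharpVal q n a)) = posDeformedIntervals q := by
  ext z
  simp only [mem_iUnion, mem_posDeformedIntervals, exists_prop]
  constructor
  · rintro ⟨x, hx, n, a, hexp, hz⟩
    exact ⟨n, a, IsECFExp.isPosEvenForm hexp hx, hz⟩
  · rintro ⟨n, a, ha, hz⟩
    exact ⟨_, ha.cfVal_pos, n, a, ha.isECFExp, hz⟩

end

theorem qdeform_intervals_dense (q : ℝ) (hq0 : 0 < q) (hq1 : q < 1) :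
    closure (⋃ (x : ℚ) (_ : 0 < x) (n : ℕ) (a : ℕ → ℤ) (_ : IsECFExp n a x),
        Set.Icc (flatVal q n a) (sharpVal q n a)) = Set.Icc 0 (1 / (1 - q)) := by
  rw [iUnion_isECFExp_eq_posDeformedIntervals]
  have hsub := posDeformedIntervals_subset_Icc hq0 hq1
  refine (closure_minimal hsub isClosed_Icc).antisymm ?_
  refine subset_closure_of_contracting_cover (f := fun i => mobiusAct (![sig1Inv q, sig2 q] i))
    (Real.toNNReal_lt_one.mpr hq1) (isBounded_Icc _ _) hsub
    ⟨q, Icc_subset_posDeformedIntervals hq0 hq1 ⟨le_rfl, hq1.le⟩⟩ ?_ ?_ ?_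
  · exact Fin.forall_fin_two.mpr
      ⟨(lipschitzOnWith_mobiusAct_sig1Inv hq0).mono Icc_subset_Ici_self,
        (lipschitzOnWith_mobiusAct_sig2 hq0).mono Icc_subset_Ici_self⟩
  · exact Fin.forall_fin_two.mpr ⟨mapsTo_mobiusAct_sig1Inv hq0 hq1, mapsTo_mobiusAct_sig2 hq0 hq1⟩
  · exact (Icc_subset_Icc_union_mobiusAct_image hq0 hq1).trans
      (union_subset_union_left _ (Icc_subset_posDeformedIntervals hq0 hq1))
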